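/- For every epistemically stratified program Π over a finite set of atoms, the FAEEL-world views of Π and the G91-world views of Π coincide; in particular, Π has at most one world view in each of these semantics. -/

import Mathlib

namespace Epist

attribute [local instance] Classical.propDecidable

/-- Epistemic formulas over a set (type) of atoms `α`. -/
inductive EForm (α : Type) : Type where
  | bot : EForm α
  | atom : α → EForm α
  | and : EForm α → EForm α → EForm α
  | or : EForm α → EForm α → EForm α
  | imp : EForm α → EForm α → EForm α
  | K : EForm α → EForm α

variable {α : Type}

/-- ¬φ abbreviates φ → ⊥. -/
def EForm.neg (φ : EForm α) : EForm α := .imp φ .bot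

/-- ⊤ abbreviates ¬⊥. -/
def EForm.top : EForm α := EForm.neg .bot

/-- Atoms occurring in a formula. -/
def EForm.atoms : EForm α → Set α
  | .bot => ∅
  | .atom a => {a}
  | .and φ ψ => φ.atoms ∪ ψ.atoms
  | .or φ ψ => φ.atoms ∪ ψ.atoms
  | .imp φ ψ => φ.atoms ∪ ψ.atoms
  | .K φ => φ.atoms

/-- A belief view: a set of HT-interpretations ⟨H,T⟩ (as pairs of sets of atoms). -/
abbrev BView (α : Type) := Set (Set α × Set α)

/-- W^t : the total belief view {⟨T,T⟩ : ⟨H,T⟩ ∈ W}. -/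
def tview (W : BView α) : BView α := (fun i => (i.2, i.2)) '' W

/-- Wellformedness of a belief view: nonempty and H ⊆ T for all members. -/
def isBView (W : BView α) : Prop := W.Nonempty ∧ ∀ i ∈ W, i.1 ⊆ i.2

/-- A belief view is total when all its HT-interpretations are total. -/
def totalView (W : BView α) : Prop := ∀ i ∈ W, i.1 = i.2

/-- Satisfaction of an epistemic formula by a belief interpretation ⟨W,H,T⟩. -/
def sat : EForm α → BView α → Set α → Set α → Prop
  | .bot, _, _, _ => False
  | .atom a, _, H, _ => a ∈ H
  | .and φ ψ, W, H, T => sat φ W H T ∧ sat ψ W H T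
  | .or φ ψ, W, H, T => sat φ W H T ∨ sat ψ W H T
  | .imp φ ψ, W, H, T =>
      (sat φ W H T → sat ψ W H T) ∧ (sat φ (tview W) T T → sat ψ (tview W) T T)
  | .K φ, W, _, _ => ∀ i ∈ W, sat φ W i.1 i.2

/-- ⟨W,H',T'⟩ ⊨ φ for all ⟨H',T'⟩ ∈ W. -/
def epSat (W : BView α) (φ : EForm α) : Prop := ∀ i ∈ W, sat φ W i.1 i.2

/-- W is an epistemic model of the theory Γ. -/
def epModel (W : BView α) (Γ : Set (EForm α)) : Prop :=
  isBView W ∧ ∀ φ ∈ Γ, epSat W φ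

/-- ⟨W,H,T⟩ is a belief model of the theory Γ. -/
def beliefModel (W : BView α) (H T : Set α) (Γ : Set (EForm α)) : Prop :=
  isBView W ∧ H ⊆ T ∧ (∀ φ ∈ Γ, sat φ W H T) ∧ ∀ φ ∈ Γ, epSat W φ

/-- Order ⪯ on belief interpretations: ⟨W',H',T'⟩ ⪯ ⟨W,H,T⟩. -/
def biLE (W' : BView α) (H' T' : Set α) (W : BView α) (H T : Set α) : Prop :=
  (T' = T ∧ H' ⊆ H) ∧
  (∀ i ∈ W, ∃ H₁, (H₁, i.2) ∈ W' ∧ H₁ ⊆ i.1) ∧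
  (∀ i ∈ W', ∃ H₁, (H₁, i.2) ∈ W ∧ i.1 ⊆ H₁)

/-- Strict order ≺ on belief interpretations. -/
def biLT (W' : BView α) (H' T' : Set α) (W : BView α) (H T : Set α) : Prop :=
  biLE W' H' T' W H T ∧ (W', H', T') ≠ (W, H, T)

/-- Order ⪯ on belief views. -/
def viewLE (W₁ W₂ : BView α) : Prop :=
  (∀ i ∈ W₂, ∃ H₁, (H₁, i.2) ∈ W₁ ∧ H₁ ⊆ i.1) ∧
  (∀ i ∈ W₁, ∃ H₂, (H₂, i.2) ∈ W₂ ∧ i.1 ⊆ H₂)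

/-- Strict order ≺ on belief views. -/
def viewLT (W₁ W₂ : BView α) : Prop := viewLE W₁ W₂ ∧ W₁ ≠ W₂

/-- ⟨W,T⟩ is an equilibrium belief model of Γ. -/
def eqBeliefModel (Γ : Set (EForm α)) (W : BView α) (T : Set α) : Prop :=
  totalView W ∧ beliefModel W T T Γ ∧
  ∀ W' H' T', beliefModel W' H' T' Γ → ¬ biLT W' H' T' W T T

/-- ⟨W,T⟩ is a weak equilibrium belief model of Γ: no belief-total (i.e. with total
view) belief model of Γ is ≺-smaller. -/
def weakEqBeliefModel (Γ : Set (EForm α)) (W : BView α) (T : Set α) : Prop :=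
  totalView W ∧ beliefModel W T T Γ ∧
  ∀ W' H' T', totalView W' → beliefModel W' H' T' Γ → ¬ biLT W' H' T' W T T

/-- Identification of a set of propositional interpretations with a total belief view. -/
def ofSets (S : Set (Set α)) : BView α := (fun T => (T, T)) '' S

/-- W is a FAEEL-world view of Γ iff W = { T : ⟨W,T⟩ is an equilibrium belief model }. -/
def FAEEL (Γ : Set (EForm α)) (W : BView α) : Prop :=
  isBView W ∧ totalView W ∧ W = ofSets {T | eqBeliefModel Γ W T}

/-- W is a weak autoepistemic world view of Γ. -/
def weakAEWorldView (Γ : Set (EForm α)) (W : BView α) : Prop :=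
  isBView W ∧ totalView W ∧ W = ofSets {T | weakEqBeliefModel Γ W T}

/-- W is a FEEL-world view of Γ. -/
def FEEL (Γ : Set (EForm α)) (W : BView α) : Prop :=
  totalView W ∧ epModel W Γ ∧ ∀ W', epModel W' Γ → ¬ viewLT W' W

/-- A belief view is simple iff ⟨H,T⟩,⟨H',T⟩ ∈ W imply H = H'. -/
def simpleView (W : BView α) : Prop := ∀ i ∈ W, ∀ j ∈ W, i.2 = j.2 → i.1 = j.1

/-- W is an EEL-world view of Γ. -/
def EEL (Γ : Set (EForm α)) (W : BView α) : Prop :=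
  totalView W ∧ epModel W Γ ∧
  ¬ ∃ W', simpleView W' ∧ epModel W' Γ ∧ tview W' = W ∧ ∃ i ∈ W', i.1 ⊂ i.2

/-- Ordinary here-and-there satisfaction (for objective, i.e. K-free, formulas). -/
def htSat (φ : EForm α) (H T : Set α) : Prop := sat φ (∅ : BView α) H T

/-- T is a stable model of the (objective) theory Δ. -/
def stableModel (Δ : Set (EForm α)) (T : Set α) : Prop :=
  (∀ φ ∈ Δ, htSat φ T T) ∧ ∀ H, H ⊂ T → ¬ ∀ φ ∈ Δ, htSat φ H T

/-- SM[Δ] : the set of stable models of Δ. -/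
def SMset (Δ : Set (EForm α)) : Set (Set α) := {T | stableModel Δ T}

/-- Subjective reduct of a formula w.r.t. a belief view W and a signature U:
each maximal subformula Kφ with Atoms(φ) ⊆ U is replaced by ⊤ if W ⊨ Kφ
and by ⊥ otherwise. -/
noncomputable def reduct (W : BView α) (U : Set α) : EForm α → EForm α
  | .bot => .bot
  | .atom a => .atom a
  | .and φ ψ => .and (reduct W U φ) (reduct W U ψ)
  | .or φ ψ => .or (reduct W U φ) (reduct W U ψ)
  | .imp φ ψ => .imp (reduct W U φ) (reduct W U ψ)
  | .K φ =>
      if φ.atoms ⊆ U then (if epSat W (.K φ) then EForm.top else .bot)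
      else .K (reduct W U φ)

/-- W is a G91-world view of Γ iff W = SM[Γ^W]. -/
def G91 (Γ : Set (EForm α)) (W : BView α) : Prop :=
  isBView W ∧ totalView W ∧ W = ofSets (SMset (reduct W Set.univ '' Γ))

/-- Negatively subjective reduct: each maximal subformula ¬Kφ is replaced
by ⊤ if W ⊭ Kφ and by ⊥ otherwise. -/
noncomputable def negReduct (W : BView α) : EForm α → EForm α
  | .bot => .bot
  | .atom a => .atom a
  | .and φ ψ => .and (negReduct W φ) (negReduct W ψ)
  | .or φ ψ => .or (negReduct W φ) (negReduct W ψ)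
  | .imp (.K φ) .bot => if epSat W (.K φ) then .bot else EForm.top
  | .imp φ ψ => .imp (negReduct W φ) (negReduct W ψ)
  | .K φ => .K (negReduct W φ)

/-- Atom, ⊤ or ⊥. -/
def isAtomBase (φ : EForm α) : Prop := (∃ a, φ = .atom a) ∨ φ = EForm.top ∨ φ = .bot

/-- Objective literals: l, ¬l or ¬¬l for l an atom, ⊤ or ⊥. -/
def isObjLit (φ : EForm α) : Prop :=
  isAtomBase φ ∨ (∃ ψ, isAtomBase ψ ∧ φ = EForm.neg ψ) ∨
    (∃ ψ, isAtomBase ψ ∧ φ = EForm.neg (EForm.neg ψ))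

/-- Subjective literals: Kl, ¬Kl or ¬¬Kl for l an objective literal. -/
def isSubjLit (φ : EForm α) : Prop :=
  (∃ l, isObjLit l ∧ φ = .K l) ∨ (∃ l, isObjLit l ∧ φ = EForm.neg (.K l)) ∨
    (∃ l, isObjLit l ∧ φ = EForm.neg (EForm.neg (.K l)))

/-- Positive subjective literals: Kl. -/
def isPosSubjLit (φ : EForm α) : Prop := ∃ l, isObjLit l ∧ φ = .K l

/-- A rule: a head disjunction of atoms and a body list of literals. -/
structure ERule (α : Type) where
  head : List α
  body : List (EForm α)

/-- Wellformedness of a rule: every body member is an (objective or subjective) literal. -/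
def ERule.wf (r : ERule α) : Prop := ∀ φ ∈ r.body, isObjLit φ ∨ isSubjLit φ

/-- Disjunction of atoms (⊥ when empty). -/
def disjForm : List α → EForm α
  | [] => .bot
  | a :: l => .or (.atom a) (disjForm l)

/-- Conjunction of formulas (⊤ when empty). -/
def conjForm : List (EForm α) → EForm α
  | [] => EForm.top
  | φ :: l => .and φ (conjForm l)

/-- The formula Head(r) ← Body(r) corresponding to a rule. -/
def ERule.form (r : ERule α) : EForm α := .imp (conjForm r.body) (disjForm r.head)

/-- Atoms of Head(r). -/
def ERule.headAtoms (r : ERule α) : Set α := {a | a ∈ r.head}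

/-- Atoms of Body_obj(r). -/
def ERule.objBodyAtoms (r : ERule α) : Set α := {a | ∃ φ ∈ r.body, isObjLit φ ∧ a ∈ φ.atoms}

/-- Atoms of Body_sub(r). -/
def ERule.subjBodyAtoms (r : ERule α) : Set α := {a | ∃ φ ∈ r.body, isSubjLit φ ∧ a ∈ φ.atoms}

/-- Atoms of Body⁺_sub(r). -/
def ERule.posSubjBodyAtoms (r : ERule α) : Set α :=
  {a | ∃ φ ∈ r.body, isPosSubjLit φ ∧ a ∈ φ.atoms}

/-- Atoms(r). -/
def ERule.atoms (r : ERule α) : Set α := r.headAtoms ∪ {a | ∃ φ ∈ r.body, a ∈ φ.atoms}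

/-- A rule is objective if all its body literals are objective. -/
def ERule.objective (r : ERule α) : Prop := ∀ φ ∈ r.body, isObjLit φ

/-- A program is a set of rules. -/
abbrev EProgram (α : Type) := Set (ERule α)

def progWF (P : EProgram α) : Prop := ∀ r ∈ P, r.wf

/-- The theory consisting of the formulas of the rules of a program. -/
def progTheory (P : EProgram α) : Set (EForm α) := ERule.form '' P

def progAtoms (P : EProgram α) : Set α := {a | ∃ r ∈ P, a ∈ r.atoms}

def progObjective (P : EProgram α) : Prop := ∀ r ∈ P, r.objective

/-- U is an epistemic splitting set of P. -/
def splittingSet (P : EProgram α) (U : Set α) : Prop :=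
  ∀ r ∈ P, r.atoms ⊆ U ∨ (r.objBodyAtoms ∪ r.headAtoms) ∩ U = ∅

/-- ⟨B,Tp⟩ is a splitting of P w.r.t. U. -/
def isSplitting (P : EProgram α) (U : Set α) (B Tp : EProgram α) : Prop :=
  B ∩ Tp = ∅ ∧ B ∪ Tp = P ∧ (∀ r ∈ B, r.atoms ⊆ U) ∧
    ∀ r ∈ Tp, (r.objBodyAtoms ∪ r.headAtoms) ∩ U = ∅

/-- Subjective reduct of a rule. -/
noncomputable def ruleReduct (W : BView α) (U : Set α) (r : ERule α) : ERule α :=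
  ⟨r.head, r.body.map (reduct W U)⟩

/-- E_U(Π,W) := (T_U(Π))^W_U, here taking the top part Tp as argument. -/
noncomputable def EU (Tp : EProgram α) (W : BView α) (U : Set α) : EProgram α :=
  ruleReduct W U '' Tp

/-- W_b ⊔ W_t (for total belief views: pointwise unions). -/
def vjoin (W₁ W₂ : BView α) : BView α :=
  {i | ∃ j ∈ W₁, ∃ k ∈ W₂, i = (j.1 ∪ k.1, j.2 ∪ k.2)}

/-- W|_U (for total belief views: pointwise intersection with U). -/
def vrestrict (W : BView α) (U : Set α) : BView α :=
  {i | ∃ j ∈ W, i = (j.1 ∩ U, j.2 ∩ U)}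

/-- Epistemic dependence dep(a,b). -/
def dep (P : EProgram α) (a b : α) : Prop :=
  ∃ r ∈ P, a ∈ r.headAtoms ∪ r.objBodyAtoms ∧ b ∈ r.subjBodyAtoms

/-- Positive epistemic dependence dep⁺(a,b). -/
def depPos (P : EProgram α) (a b : α) : Prop :=
  ∃ r ∈ P, a ∈ r.headAtoms ∪ r.objBodyAtoms ∧ b ∈ r.posSubjBodyAtoms

/-- P is epistemically stratified. -/
def stratified (P : EProgram α) : Prop :=
  ∃ lam : α → ℕ,
    (∀ r ∈ P, ∀ a ∈ r.atoms \ r.subjBodyAtoms, ∀ b ∈ r.atoms \ r.subjBodyAtoms,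
      lam a = lam b) ∧
    ∀ a b, dep P a b → lam a > lam b

/-- P is epistemically tight. -/
def tight (P : EProgram α) : Prop :=
  ∃ lam : α → ℕ,
    (∀ r ∈ P, ∀ a ∈ r.atoms \ r.subjBodyAtoms, ∀ b ∈ r.atoms \ r.subjBodyAtoms,
      lam a = lam b) ∧
    ∀ a b, depPos P a b → lam a > lam b

/-- A semantics S satisfies the epistemic splitting property. -/
def satisfiesSplitting (S : EProgram α → BView α → Prop) : Prop :=
  ∀ P : EProgram α, progWF P → ∀ U : Set α, splittingSet P U →
    ∀ B Tp : EProgram α, isSplitting P U B Tp →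
      ∀ W : BView α,
        S P W ↔ ∃ Wb Wt, S B Wb ∧ S (EU Tp Wb U) Wt ∧ W = vjoin Wb Wt

/-- A semantics S satisfies supra-ASP. -/
def supraASP (S : EProgram α → BView α → Prop) : Prop :=
  ∀ P : EProgram α, progWF P → progObjective P →
    (SMset (progTheory P) ≠ ∅ ∧ ∀ W, (S P W ↔ W = ofSets (SMset (progTheory P)))) ∨
    (SMset (progTheory P) = ∅ ∧ ∀ W, ¬ S P W)

end Epist

/-!
Relative to a total view `W`, a rule holds in `⟨W, H, T⟩` exactly when its subjective reduct
holds in `⟨H, T⟩` in here-and-there logic. So both semantics compare the worlds of `W` with the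
stable models of the objective program `Π^W`, and equilibrium worlds are always such stable
models.

Stratification puts the reduct of each rule on a single level, strictly above the atoms of its
subjective literals. The converse and the uniqueness of G91-world views then follow by induction
on levels: a belief model `⟨W', H', T⟩ ≺ ⟨W, T⟩` whose members are total below level `k`
evaluates the rules of level `k` like `Π^W`, so stability of the worlds of `W` makes it total at
level `k`; and two G91-world views that agree below level `k` have the same reducts of the rules
of level `k`, so their stable models can be spliced at level `k`.
-/

namespace Epist

variable {α : Type}

section Formulas

def EForm.KFree : EForm α → Prop
  | .bot => True
  | .atom _ => True
  | .and φ ψ => φ.KFree ∧ ψ.KFree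
  | .or φ ψ => φ.KFree ∧ ψ.KFree
  | .imp φ ψ => φ.KFree ∧ ψ.KFree
  | .K _ => False

lemma EForm.kFree_top : (EForm.top : EForm α).KFree := ⟨trivial, trivial⟩

lemma isObjLit.kFree {φ : EForm α} (h : isObjLit φ) : φ.KFree := by
  have base : ∀ {ψ : EForm α}, isAtomBase ψ → ψ.KFree := by
    rintro _ (⟨a, rfl⟩ | rfl | rfl)
    exacts [trivial, EForm.kFree_top, trivial]
  rcases h with h | ⟨ψ, hψ, rfl⟩ | ⟨ψ, hψ, rfl⟩
  exacts [base h, ⟨base hψ, trivial⟩, ⟨⟨base hψ, trivial⟩, trivial⟩]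

@[simp] lemma EForm.atoms_neg (φ : EForm α) : φ.neg.atoms = φ.atoms := Set.union_empty _

@[simp] lemma tview_empty : tview (∅ : BView α) = ∅ := Set.image_empty _

lemma tview_eq_self {W : BView α} (h : totalView W) : tview W = W := by
  ext ⟨H, T⟩
  constructor
  · rintro ⟨⟨H', T'⟩, hi, hiT⟩
    obtain rfl : H' = T' := h _ hi
    exact hiT ▸ hi
  · intro hi
    obtain rfl : H = T := h _ hi
    exact ⟨_, hi, rfl⟩

lemma totalView_tview (W : BView α) : totalView (tview W) := by
  rintro _ ⟨i, -, rfl⟩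
  rfl

@[simp] lemma tview_tview (W : BView α) : tview (tview W) = tview W :=
  tview_eq_self (totalView_tview W)

lemma sat_imp {φ ψ : EForm α} {W : BView α} {H T : Set α} :
    sat (.imp φ ψ) W H T ↔
      (sat φ W H T → sat ψ W H T) ∧ (sat φ (tview W) T T → sat ψ (tview W) T T) := Iff.rfl

lemma sat_neg {φ : EForm α} {W : BView α} {H T : Set α} :
    sat φ.neg W H T ↔ ¬ sat φ W H T ∧ ¬ sat φ (tview W) T T := Iff.rfl

@[simp] lemma htSat_bot {H T : Set α} : ¬ htSat (.bot : EForm α) H T := id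

@[simp] lemma htSat_atom {a : α} {H T : Set α} : htSat (.atom a) H T ↔ a ∈ H := Iff.rfl

@[simp] lemma htSat_and {φ ψ : EForm α} {H T : Set α} :
    htSat (.and φ ψ) H T ↔ htSat φ H T ∧ htSat ψ H T := Iff.rfl

@[simp] lemma htSat_or {φ ψ : EForm α} {H T : Set α} :
    htSat (.or φ ψ) H T ↔ htSat φ H T ∨ htSat ψ H T := Iff.rfl

@[simp] lemma htSat_imp {φ ψ : EForm α} {H T : Set α} :
    htSat (.imp φ ψ) H T ↔ (htSat φ H T → htSat ψ H T) ∧ (htSat φ T T → htSat ψ T T) := by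
  simp only [htSat, sat_imp, tview_empty]

@[simp] lemma htSat_K {φ : EForm α} {H T : Set α} : htSat (.K φ) H T := fun _ h => h.elim

lemma htSat_neg {φ : EForm α} {H T : Set α} :
    htSat φ.neg H T ↔ ¬ htSat φ H T ∧ ¬ htSat φ T T := by
  simp [EForm.neg]

@[simp] lemma htSat_top {H T : Set α} : htSat (EForm.top : EForm α) H T := by
  simp [EForm.top, htSat_neg]

lemma htSat_congr {φ : EForm α} {A H T H' T' : Set α} (hA : φ.atoms ⊆ A)
    (hH : H ∩ A = H' ∩ A) (hT : T ∩ A = T' ∩ A) : htSat φ H T ↔ htSat φ H' T' := by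
  induction φ generalizing H T H' T' with
  | bot => simp
  | atom a =>
    have ha : a ∈ A := hA rfl
    simpa [ha] using congrArg (a ∈ ·) hH
  | and φ ψ ihφ ihψ | or φ ψ ihφ ihψ =>
    simp only [htSat_and, htSat_or, EForm.atoms, Set.union_subset_iff] at hA ⊢
    rw [ihφ hA.1 hH hT, ihψ hA.2 hH hT]
  | imp φ ψ ihφ ihψ =>
    simp only [htSat_imp, EForm.atoms, Set.union_subset_iff] at hA ⊢
    rw [ihφ hA.1 hH hT, ihψ hA.2 hH hT, ihφ hA.1 hT hT, ihψ hA.2 hT hT]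
  | K φ => simp

lemma sat_iff_htSat {φ : EForm α} (hφ : φ.KFree) {W : BView α} {H T : Set α} :
    sat φ W H T ↔ htSat φ H T := by
  induction φ generalizing W H T with
  | bot | atom => exact Iff.rfl
  | and φ ψ ihφ ihψ => exact and_congr (ihφ hφ.1) (ihψ hφ.2)
  | or φ ψ ihφ ihψ => exact or_congr (ihφ hφ.1) (ihψ hφ.2)
  | imp φ ψ ihφ ihψ => rw [sat_imp, htSat_imp, ihφ hφ.1, ihψ hφ.2, ihφ hφ.1, ihψ hφ.2]
  | K => exact hφ.elim

end Formulas

section Views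

def Knows (W : BView α) (l : EForm α) : Prop := ∀ i ∈ W, htSat l i.1 i.2

lemma sat_K_iff {l : EForm α} (hl : l.KFree) {W : BView α} {H T : Set α} :
    sat (.K l) W H T ↔ Knows W l :=
  forall₂_congr fun _ _ => sat_iff_htSat hl

lemma epSat_K_iff {l : EForm α} (hl : l.KFree) {W : BView α} : epSat W (.K l) ↔ Knows W l :=
  ⟨fun h i hi => (sat_K_iff hl).1 (h i hi) i hi, fun h _ _ => (sat_K_iff hl).2 h⟩

lemma knows_vrestrict {W : BView α} {A : Set α} {l : EForm α} (hl : l.atoms ⊆ A) :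
    Knows (vrestrict W A) l ↔ Knows W l := by
  have hrestrict : ∀ i ∈ W, htSat l (i.1 ∩ A) (i.2 ∩ A) ↔ htSat l i.1 i.2 := fun i _ =>
    htSat_congr hl (by rw [Set.inter_assoc, Set.inter_self])
      (by rw [Set.inter_assoc, Set.inter_self])
  constructor
  · exact fun h i hi => (hrestrict i hi).1 (h _ ⟨i, hi, rfl⟩)
  · rintro h _ ⟨i, hi, rfl⟩
    exact (hrestrict i hi).2 (h i hi)

lemma knows_congr {V W : BView α} {A : Set α} {l : EForm α} (hl : l.atoms ⊆ A)
    (h : vrestrict V A = vrestrict W A) : Knows V l ↔ Knows W l := by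
  rw [← knows_vrestrict hl, h, knows_vrestrict hl]

lemma vrestrict_tview {W : BView α} {A : Set α} (h : ∀ i ∈ W, i.1 ∩ A = i.2 ∩ A) :
    vrestrict (tview W) A = vrestrict W A := by
  ext j
  constructor
  · rintro ⟨_, ⟨i, hi, rfl⟩, rfl⟩
    exact ⟨i, hi, by rw [h i hi]⟩
  · rintro ⟨i, hi, rfl⟩
    exact ⟨_, ⟨i, hi, rfl⟩, by rw [h i hi]⟩

@[simp] lemma vrestrict_univ (W : BView α) : vrestrict W Set.univ = W := by
  simp [vrestrict]

lemma vrestrict_empty {W : BView α} (hW : W.Nonempty) : vrestrict W ∅ = {(∅, ∅)} := by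
  obtain ⟨i, hi⟩ := hW
  ext j
  simp only [vrestrict, Set.inter_empty, Set.mem_ofPred_eq, Set.mem_singleton_iff]
  exact ⟨fun ⟨_, _, hj⟩ => hj, fun hj => ⟨i, hi, hj⟩⟩

lemma tview_eq_of_biLE {W W' : BView α} {H H' T T' : Set α} (hW : totalView W)
    (h : biLE W' H' T' W H T) : tview W' = W := by
  obtain ⟨-, hcover, hbound⟩ := h
  ext ⟨H₁, T₁⟩
  constructor
  · rintro ⟨i, hi, hiT⟩
    obtain ⟨H₂, hmem, -⟩ := hbound i hi
    obtain rfl : H₂ = i.2 := hW _ hmem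
    exact hiT ▸ hmem
  · intro hi
    obtain rfl : H₁ = T₁ := hW _ hi
    obtain ⟨H₂, hmem, -⟩ := hcover _ hi
    exact ⟨_, hmem, rfl⟩

end Views

section Reduct

lemma reduct_neg (W : BView α) (U : Set α) (φ : EForm α) :
    reduct W U φ.neg = (reduct W U φ).neg := rfl

lemma reduct_of_kFree {φ : EForm α} (hφ : φ.KFree) (W : BView α) (U : Set α) :
    reduct W U φ = φ := by
  induction φ with
  | bot | atom => rfl
  | and φ ψ ihφ ihψ | or φ ψ ihφ ihψ | imp φ ψ ihφ ihψ =>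
    simp only [reduct, ihφ hφ.1, ihψ hφ.2]
  | K => exact hφ.elim

lemma htSat_reduct_K {l : EForm α} (hl : l.KFree) {W : BView α} {H T : Set α} :
    htSat (reduct W Set.univ (.K l)) H T ↔ Knows W l := by
  simp only [reduct, Set.subset_univ, if_true, ← epSat_K_iff hl]
  split_ifs with h <;> simp [h]

lemma atoms_reduct_K (W : BView α) (l : EForm α) : (reduct W Set.univ (.K l)).atoms = ∅ := by
  simp only [reduct, Set.subset_univ, if_true]
  split_ifs <;> simp [EForm.top, EForm.atoms]

lemma reduct_K_congr {W W' : BView α} {l : EForm α} (hl : l.KFree)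
    (h : Knows W l ↔ Knows W' l) : reduct W Set.univ (.K l) = reduct W' Set.univ (.K l) := by
  classical
  simp only [reduct, Set.subset_univ, if_true]
  exact if_congr (by rw [epSat_K_iff hl, epSat_K_iff hl, h]) rfl rfl

lemma sat_conjForm {L : List (EForm α)} {W : BView α} {H T : Set α} :
    sat (conjForm L) W H T ↔ ∀ φ ∈ L, sat φ W H T := by
  induction L with
  | nil => simp [conjForm, EForm.top, sat_neg, sat]
  | cons φ L ih => simp only [conjForm, sat, ih, List.forall_mem_cons]

lemma sat_disjForm {L : List α} {W : BView α} {H T : Set α} :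
    sat (disjForm L) W H T ↔ ∃ a ∈ L, a ∈ H := by
  induction L with
  | nil => simp [disjForm, sat]
  | cons a L ih => simp [disjForm, sat, ih]

lemma mem_atoms_conjForm {L : List (EForm α)} {a : α} :
    a ∈ (conjForm L).atoms ↔ ∃ φ ∈ L, a ∈ φ.atoms := by
  induction L with
  | nil => simp [conjForm, EForm.top, EForm.atoms]
  | cons φ L ih => simp [conjForm, EForm.atoms, ih]

lemma atoms_disjForm (L : List α) : (disjForm L).atoms = {a | a ∈ L} := by
  induction L with
  | nil => simp [disjForm, EForm.atoms]
  | cons a L ih => ext; simp [disjForm, EForm.atoms, ih]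

lemma reduct_form (W : BView α) (U : Set α) (r : ERule α) :
    reduct W U r.form = .imp (conjForm (r.body.map (reduct W U))) (disjForm r.head) := by
  have hconj : ∀ L : List (EForm α), reduct W U (conjForm L) = conjForm (L.map (reduct W U)) := by
    intro L
    induction L with
    | nil => rfl
    | cons φ L ih => simp only [conjForm, reduct, List.map, ih]
  have hdisj : ∀ L : List α, reduct W U (disjForm L) = disjForm L := by
    intro L
    induction L with
    | nil => rfl
    | cons a L ih => simp only [disjForm, reduct, ih]
  simp only [ERule.form, reduct, hconj, hdisj]

lemma atoms_reduct_form_subset {r : ERule α} (hr : r.wf) (W : BView α) :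
    (reduct W Set.univ r.form).atoms ⊆ r.headAtoms ∪ r.objBodyAtoms := by
  rintro a ha
  simp only [reduct_form, EForm.atoms, atoms_disjForm, Set.mem_union, mem_atoms_conjForm] at ha
  rcases ha with ⟨ψ, hψ, ha⟩ | ha
  · obtain ⟨φ, hφ, rfl⟩ := List.mem_map.1 hψ
    right
    rcases hr φ hφ with hobj | ⟨l, -, rfl⟩ | ⟨l, -, rfl⟩ | ⟨l, -, rfl⟩
    · exact ⟨φ, hφ, hobj, by rwa [reduct_of_kFree hobj.kFree] at ha⟩
    all_goals simp [reduct_neg, atoms_reduct_K] at ha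
  · exact Or.inl ha

lemma sat_subjLit_iff {V W : BView α} {A H T H' T' : Set α} {φ : EForm α} (hφ : isSubjLit φ)
    (hA : φ.atoms ⊆ A) (hV : vrestrict V A = vrestrict W A)
    (hVt : vrestrict (tview V) A = vrestrict W A) :
    sat φ V H T ↔ htSat (reduct W Set.univ φ) H' T' := by
  rcases hφ with ⟨l, hl, rfl⟩ | ⟨l, hl, rfl⟩ | ⟨l, hl, rfl⟩ <;>
  · simp only [EForm.atoms, EForm.atoms_neg] at hA
    simp only [sat_neg, htSat_neg, reduct_neg, sat_K_iff hl.kFree, htSat_reduct_K hl.kFree,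
      tview_tview, knows_congr hA hV, knows_congr hA hVt]

lemma sat_form_iff_htSat_reduct {V W : BView α} {A : Set α} {r : ERule α} (hr : r.wf)
    (hA : r.subjBodyAtoms ⊆ A) (hV : vrestrict V A = vrestrict W A)
    (hVt : vrestrict (tview V) A = vrestrict W A) (H T : Set α) :
    sat r.form V H T ↔ htSat (reduct W Set.univ r.form) H T := by
  have hbody : ∀ V' : BView α, vrestrict V' A = vrestrict W A →
      vrestrict (tview V') A = vrestrict W A → ∀ H T : Set α,
      sat (conjForm r.body) V' H T ↔ htSat (conjForm (r.body.map (reduct W Set.univ))) H T := by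
    intro V' h h' H T
    simp only [sat_conjForm, htSat, List.forall_mem_map]
    refine forall₂_congr fun φ hφ => ?_
    rcases hr φ hφ with hobj | hsubj
    · rw [reduct_of_kFree hobj.kFree, sat_iff_htSat hobj.kFree, sat_iff_htSat hobj.kFree]
    · exact sat_subjLit_iff hsubj (fun a ha => hA ⟨φ, hφ, hsubj, ha⟩) h h'
  rw [reduct_form, ERule.form, sat_imp, htSat_imp, hbody V hV hVt,
    hbody (tview V) hVt (by rwa [tview_tview])]
  simp only [htSat, sat_disjForm]

lemma sat_form_iff_htSat_reduct_of_total {W : BView α} {r : ERule α} (hr : r.wf)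
    (hW : totalView W) (H T : Set α) :
    sat r.form W H T ↔ htSat (reduct W Set.univ r.form) H T :=
  sat_form_iff_htSat_reduct hr (Set.subset_univ _) rfl (by rw [tview_eq_self hW]) H T

lemma reduct_form_congr {W W' : BView α} {A : Set α} {r : ERule α} (hr : r.wf)
    (hA : r.subjBodyAtoms ⊆ A) (h : vrestrict W A = vrestrict W' A) :
    reduct W Set.univ r.form = reduct W' Set.univ r.form := by
  rw [reduct_form, reduct_form, List.map_congr_left]
  intro φ hφ
  rcases hr φ hφ with hobj | hsubj
  · rw [reduct_of_kFree hobj.kFree, reduct_of_kFree hobj.kFree]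
  · have hφA : φ.atoms ⊆ A := fun a ha => hA ⟨φ, hφ, hsubj, ha⟩
    rcases hsubj with ⟨l, hl, rfl⟩ | ⟨l, hl, rfl⟩ | ⟨l, hl, rfl⟩ <;>
    · simp only [EForm.atoms, EForm.atoms_neg] at hφA
      simp only [reduct_neg, reduct_K_congr hl.kFree (knows_congr hφA h)]

end Reduct

section Splicing

lemma stableModel.eq_of_subset {Δ : Set (EForm α)} {H T : Set α} (h : stableModel Δ T)
    (hHT : H ⊆ T) (hH : ∀ φ ∈ Δ, htSat φ H T) : H = T := by
  by_contra hne
  exact h.2 H (Set.ssubset_iff_subset_ne.2 ⟨hHT, hne⟩) hH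

/-- Minimality of a stable model, localised to a set `S` of atoms. -/
lemma stableModel.inter_eq_of_ite {Δ : Set (EForm α)} {S H T T₀ : Set α}
    (h : stableModel Δ T₀) (hHT : H ⊆ T) (hT : T ∩ S = T₀ ∩ S)
    (hH : ∀ φ ∈ Δ, htSat φ (S.ite H T₀) T₀) : H ∩ S = T ∩ S := by
  have hsub : S.ite H T₀ ⊆ T₀ :=
    Set.union_subset (fun x hx => (hT.subset ⟨hHT hx.1, hx.2⟩).1) Set.sdiff_subset
  rw [← Set.ite_inter_self S H T₀, h.eq_of_subset hsub hH, hT]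

theorem stableModel_ite {Δ₁ Δ₂ : Set (EForm α)} {S T₁ T₂ : Set α}
    (hS : ∀ φ ∈ Δ₁ ∪ Δ₂, φ.atoms ⊆ Sᶜ ∨ φ ∈ Δ₁ ∩ Δ₂ ∧ φ.atoms ⊆ S)
    (h₁ : stableModel Δ₁ T₁) (h₂ : stableModel Δ₂ T₂) : stableModel Δ₂ (S.ite T₁ T₂) := by
  have hTS := Set.ite_inter_self S T₁ T₂
  have hTSc := Set.ite_inter_compl_self S T₁ T₂
  refine ⟨fun φ hφ => ?_, fun H hHT hH => ?_⟩
  · rcases hS φ (Or.inr hφ) with hφS | ⟨⟨hφ₁, -⟩, hφS⟩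
    · exact (htSat_congr hφS hTSc.symm hTSc.symm).1 (h₂.1 φ hφ)
    · exact (htSat_congr hφS hTS.symm hTS.symm).1 (h₁.1 φ hφ₁)
  obtain ⟨a, haT, haH⟩ := Set.exists_of_ssubset hHT
  by_cases ha : a ∈ S
  · refine haH ((h₁.inter_eq_of_ite hHT.subset hTS ?_).symm.subset ⟨haT, ha⟩).1
    intro φ hφ
    rcases hS φ (Or.inl hφ) with hφS | ⟨⟨-, hφ₂⟩, hφS⟩
    · exact (htSat_congr hφS (Set.ite_inter_compl_self _ _ _).symm rfl).1 (h₁.1 φ hφ)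
    · exact (htSat_congr hφS (Set.ite_inter_self _ _ _).symm hTS).1 (hH φ hφ₂)
  · refine haH ((h₂.inter_eq_of_ite hHT.subset hTSc ?_).symm.subset ⟨haT, ha⟩).1
    intro φ hφ
    rcases hS φ (Or.inr hφ) with hφS | ⟨-, hφS⟩
    · exact (htSat_congr hφS (Set.ite_inter_self _ _ _).symm hTSc).1 (hH φ hφ)
    · rw [Set.ite_compl]
      exact (htSat_congr hφS (Set.ite_inter_self _ _ _).symm rfl).1 (h₂.1 φ hφ)

end Splicing

section Stratification

/-- `stratified P` unfolds to `∃ lam, IsStratification P lam`. -/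
def IsStratification (P : EProgram α) (lam : α → ℕ) : Prop :=
  (∀ r ∈ P, ∀ a ∈ r.atoms \ r.subjBodyAtoms, ∀ b ∈ r.atoms \ r.subjBodyAtoms, lam a = lam b) ∧
    ∀ a b, dep P a b → lam a > lam b

variable {P : EProgram α} {lam : α → ℕ}

lemma IsStratification.level_eq (h : IsStratification P lam) {r : ERule α} (hr : r ∈ P)
    {a b : α} (ha : a ∈ r.headAtoms ∪ r.objBodyAtoms) (hb : b ∈ r.headAtoms ∪ r.objBodyAtoms) :
    lam a = lam b := by
  have hobj : ∀ {c}, c ∈ r.headAtoms ∪ r.objBodyAtoms → c ∈ r.atoms \ r.subjBodyAtoms := by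
    rintro c hc
    refine ⟨?_, fun hsubj => lt_irrefl _ (h.2 c c ⟨r, hr, hc, hsubj⟩)⟩
    rcases hc with hc | ⟨φ, hφ, -, hc⟩
    exacts [Or.inl hc, Or.inr ⟨φ, hφ, hc⟩]
  exact h.1 r hr a (hobj ha) b (hobj hb)

lemma IsStratification.rule_cases (h : IsStratification P lam) {r : ERule α} (hr : r ∈ P)
    (k : ℕ) :
    (r.headAtoms ∪ r.objBodyAtoms ⊆ lam ⁻¹' {k} ∧ r.subjBodyAtoms ⊆ {a | lam a < k}) ∨
      r.headAtoms ∪ r.objBodyAtoms ⊆ (lam ⁻¹' {k})ᶜ := by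
  by_cases hk : ∃ a ∈ r.headAtoms ∪ r.objBodyAtoms, lam a = k
  · obtain ⟨a, ha, rfl⟩ := hk
    exact Or.inl ⟨fun b hb => h.level_eq hr hb ha, fun b hb => h.2 a b ⟨r, hr, ha, hb⟩⟩
  · exact Or.inr fun a ha hak => hk ⟨a, ha, hak⟩

lemma setOf_level_lt_succ (k : ℕ) : {a | lam a < k + 1} = {a | lam a < k} ∪ lam ⁻¹' {k} := by
  ext a
  simp only [Set.mem_union, Set.mem_ofPred_eq, Set.mem_preimage, Set.mem_singleton_iff]
  omega

end Stratification

section ProgramReduct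

variable {P : EProgram α}

def progReduct (P : EProgram α) (W : BView α) : Set (EForm α) :=
  (fun r => reduct W Set.univ r.form) '' P

lemma image_reduct_progTheory (W : BView α) :
    reduct W Set.univ '' progTheory P = progReduct P W :=
  Set.image_image _ _ _

lemma progReduct_split {lam : α → ℕ} (hP : IsStratification P lam) (hwf : progWF P)
    {W W' : BView α} {k : ℕ}
    (h : vrestrict W {a | lam a < k} = vrestrict W' {a | lam a < k}) :
    ∀ φ ∈ progReduct P W ∪ progReduct P W', φ.atoms ⊆ (lam ⁻¹' {k})ᶜ ∨
      φ ∈ progReduct P W ∩ progReduct P W' ∧ φ.atoms ⊆ lam ⁻¹' {k} := by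
  have key : ∀ r ∈ P, ∀ V, V = W ∨ V = W' →
      (reduct V Set.univ r.form).atoms ⊆ (lam ⁻¹' {k})ᶜ ∨
        (reduct V Set.univ r.form ∈ progReduct P W ∩ progReduct P W' ∧
          (reduct V Set.univ r.form).atoms ⊆ lam ⁻¹' {k}) := by
    intro r hr V hV
    have hatoms := atoms_reduct_form_subset (hwf r hr) V
    rcases hP.rule_cases hr k with ⟨hlev, hsubj⟩ | hlev
    · have hred := reduct_form_congr (hwf r hr) hsubj h
      refine Or.inr ⟨?_, hatoms.trans hlev⟩
      rcases hV with rfl | rfl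
      exacts [⟨⟨r, hr, rfl⟩, ⟨r, hr, hred.symm⟩⟩, ⟨⟨r, hr, hred⟩, ⟨r, hr, rfl⟩⟩]
    · exact Or.inl (hatoms.trans hlev)
  rintro _ (⟨r, hr, rfl⟩ | ⟨r, hr, rfl⟩)
  exacts [key r hr W (Or.inl rfl), key r hr W' (Or.inr rfl)]

end ProgramReduct

section WorldViews

variable {P : EProgram α} {lam : α → ℕ}

lemma snd_mem_of_mem_ofSets {S : Set (Set α)} {i : Set α × Set α} (hi : i ∈ ofSets S) :
    i.2 ∈ S := by
  obtain ⟨T, hT, rfl⟩ := hi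
  exact hT

lemma stableModel_of_eqBeliefModel (hwf : progWF P) {W : BView α} {T : Set α}
    (h : eqBeliefModel (progTheory P) W T) : stableModel (progReduct P W) T := by
  obtain ⟨htot, ⟨hW, -, hsat, hep⟩, hmin⟩ := h
  have hiff := fun {r} (hr : r ∈ P) => sat_form_iff_htSat_reduct_of_total (hwf r hr) htot
  refine ⟨?_, fun H hHT hH => ?_⟩
  · rintro _ ⟨r, hr, rfl⟩
    exact (hiff hr T T).1 (hsat _ ⟨r, hr, rfl⟩)
  refine hmin W H T ⟨hW, hHT.subset, ?_, hep⟩ ⟨⟨⟨rfl, hHT.subset⟩, ?_, ?_⟩, ?_⟩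
  · rintro _ ⟨r, hr, rfl⟩
    exact (hiff hr H T).2 (hH _ ⟨r, hr, rfl⟩)
  · exact fun i hi => ⟨i.1, hi, subset_rfl⟩
  · exact fun i hi => ⟨i.1, hi, subset_rfl⟩
  · exact fun heq => hHT.ne (congrArg (·.2.1) heq)

lemma beliefModel_of_stableModel (hwf : progWF P) {W : BView α} (hW : isBView W)
    (htot : totalView W) (hWs : ∀ i ∈ W, stableModel (progReduct P W) i.2) {T : Set α}
    (hT : stableModel (progReduct P W) T) : beliefModel W T T (progTheory P) := by
  have hiff := fun {r} (hr : r ∈ P) => sat_form_iff_htSat_reduct_of_total (hwf r hr) htot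
  refine ⟨hW, subset_rfl, ?_, ?_⟩
  · rintro _ ⟨r, hr, rfl⟩
    exact (hiff hr T T).2 (hT.1 _ ⟨r, hr, rfl⟩)
  · rintro _ ⟨r, hr, rfl⟩ i hi
    rw [htot i hi]
    exact (hiff hr _ _).2 ((hWs i hi).1 _ ⟨r, hr, rfl⟩)

lemma inter_level_eq_of_sat (hP : IsStratification P lam) (hwf : progWF P) {W W' : BView α}
    {k : ℕ} (hW' : tview W' = W)
    (hbelow : ∀ i ∈ W', i.1 ∩ {a | lam a < k} = i.2 ∩ {a | lam a < k})
    {H T : Set α} (hHT : H ⊆ T) (hsat : ∀ r ∈ P, sat r.form W' H T)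
    (hT : stableModel (progReduct P W) T) :
    H ∩ lam ⁻¹' {k} = T ∩ lam ⁻¹' {k} := by
  have hV : vrestrict W' {a | lam a < k} = vrestrict W {a | lam a < k} := by
    rw [← hW', vrestrict_tview hbelow]
  refine hT.inter_eq_of_ite hHT rfl ?_
  rintro _ ⟨r, hr, rfl⟩
  have hatoms := atoms_reduct_form_subset (hwf r hr) W
  rcases hP.rule_cases hr k with ⟨hlev, hsubj⟩ | hlev
  · have hH := (sat_form_iff_htSat_reduct (hwf r hr) hsubj hV (by rw [hW']) H T).1 (hsat r hr)
    exact (htSat_congr (hatoms.trans hlev) (Set.ite_inter_self _ _ _).symm rfl).1 hH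
  · exact (htSat_congr (hatoms.trans hlev) (Set.ite_inter_compl_self _ _ _).symm rfl).1
      (hT.1 _ ⟨r, hr, rfl⟩)

lemma eqBeliefModel_of_stableModel (hP : IsStratification P lam) (hwf : progWF P) {N : ℕ}
    (hN : ∀ a, lam a < N) {W : BView α} (hW : isBView W) (htot : totalView W)
    (hWs : ∀ i ∈ W, stableModel (progReduct P W) i.2) {T : Set α}
    (hT : stableModel (progReduct P W) T) : eqBeliefModel (progTheory P) W T := by
  refine ⟨htot, beliefModel_of_stableModel hwf hW htot hWs hT, ?_⟩
  rintro W' H' T' ⟨⟨-, hW'sub⟩, hH'T', hsat', hep'⟩ ⟨hle, hne⟩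
  have htW' : tview W' = W := tview_eq_of_biLE htot hle
  obtain ⟨⟨rfl, -⟩, -⟩ := hle
  have hworld : ∀ i ∈ insert (H', T') W', i.1 ⊆ i.2 ∧ (∀ r ∈ P, sat r.form W' i.1 i.2) ∧
      stableModel (progReduct P W) i.2 := by
    rintro i (rfl | hi)
    · exact ⟨hH'T', fun r hr => hsat' _ ⟨r, hr, rfl⟩, hT⟩
    · exact ⟨hW'sub i hi, fun r hr => hep' _ ⟨r, hr, rfl⟩ i hi,
        hWs (i.2, i.2) (htW' ▸ ⟨i, hi, rfl⟩)⟩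
  have hlevels : ∀ k, ∀ i ∈ insert (H', T') W',
      i.1 ∩ {a | lam a < k} = i.2 ∩ {a | lam a < k} := by
    intro k
    induction k with
    | zero => simp
    | succ k ih =>
      intro i hi
      obtain ⟨hHT, hsat, hstable⟩ := hworld i hi
      rw [setOf_level_lt_succ, Set.inter_union_distrib_left, Set.inter_union_distrib_left, ih i hi,
        inter_level_eq_of_sat hP hwf htW' (fun j hj => ih j (Set.mem_insert_of_mem _ hj))
          hHT hsat hstable]
  have htotal : ∀ i ∈ insert (H', T') W', i.1 = i.2 := fun i hi => by
    simpa [show {a | lam a < N} = Set.univ from Set.eq_univ_of_forall hN] using hlevels N i hi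
  have hH' : H' = T' := htotal _ (Set.mem_insert _ _)
  apply hne
  rw [hH', ← htW',
    tview_eq_self fun i hi => htotal i (Set.mem_insert_of_mem _ hi)]

lemma eqBeliefModel_iff_stableModel (hP : IsStratification P lam) (hwf : progWF P) {N : ℕ}
    (hN : ∀ a, lam a < N) {W : BView α} (hW : isBView W) (htot : totalView W)
    (hWs : ∀ i ∈ W, stableModel (progReduct P W) i.2) {T : Set α} :
    eqBeliefModel (progTheory P) W T ↔ stableModel (progReduct P W) T :=
  ⟨stableModel_of_eqBeliefModel hwf, eqBeliefModel_of_stableModel hP hwf hN hW htot hWs⟩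

theorem FAEEL_iff_G91 (hP : IsStratification P lam) (hwf : progWF P) {N : ℕ}
    (hN : ∀ a, lam a < N) (W : BView α) : FAEEL (progTheory P) W ↔ G91 (progTheory P) W := by
  rw [FAEEL, G91, image_reduct_progTheory]
  refine ⟨fun ⟨hW, htot, hfix⟩ => ⟨hW, htot, ?_⟩, fun ⟨hW, htot, hfix⟩ => ⟨hW, htot, ?_⟩⟩
  · have hWs : ∀ i ∈ W, stableModel (progReduct P W) i.2 := fun i hi =>
      stableModel_of_eqBeliefModel hwf (snd_mem_of_mem_ofSets (hfix.subset hi))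
    have hset : {T | eqBeliefModel (progTheory P) W T} = SMset (progReduct P W) :=
      Set.ext fun T => eqBeliefModel_iff_stableModel hP hwf hN hW htot hWs
    rwa [hset] at hfix
  · have hWs : ∀ i ∈ W, stableModel (progReduct P W) i.2 := fun i hi =>
      snd_mem_of_mem_ofSets (hfix.subset hi)
    have hset : {T | eqBeliefModel (progTheory P) W T} = SMset (progReduct P W) :=
      Set.ext fun T => eqBeliefModel_iff_stableModel hP hwf hN hW htot hWs
    rwa [hset]

lemma vrestrict_subset_of_G91 (hP : IsStratification P lam) (hwf : progWF P) {W W' : BView α}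
    (hW : G91 (progTheory P) W) (hW' : G91 (progTheory P) W') {k : ℕ}
    (h : vrestrict W {a | lam a < k} = vrestrict W' {a | lam a < k}) :
    vrestrict W {a | lam a < k + 1} ⊆ vrestrict W' {a | lam a < k + 1} := by
  obtain ⟨-, -, hfix⟩ := hW
  obtain ⟨-, -, hfix'⟩ := hW'
  rw [image_reduct_progTheory] at hfix hfix'
  rintro _ ⟨_, hj, rfl⟩
  obtain ⟨T, hT, rfl⟩ := hfix.subset hj
  obtain ⟨_, hj', hjT⟩ := h.subset ⟨(T, T), hj, rfl⟩
  obtain ⟨T', hT', rfl⟩ := hfix'.subset hj'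
  have hbelow : T ∩ {a | lam a < k} = T' ∩ {a | lam a < k} := by
    simpa using congrArg Prod.fst hjT
  refine ⟨_, hfix'.symm.subset ⟨_, stableModel_ite (progReduct_split hP hwf h) hT hT', rfl⟩, ?_⟩
  have hsplice : T ∩ {a | lam a < k + 1} = (lam ⁻¹' {k}).ite T T' ∩ {a | lam a < k + 1} := by
    ext a
    have := congrArg (a ∈ ·) hbelow
    simp only [Set.mem_inter_iff, Set.mem_ofPred_eq, eq_iff_iff] at this
    simp only [Set.ite, Set.mem_inter_iff, Set.mem_union, Set.mem_sdiff, Set.mem_preimage,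
      Set.mem_singleton_iff, Set.mem_ofPred_eq]
    by_cases hk : lam a = k
    · simp [hk]
    · rw [show lam a < k + 1 ↔ lam a < k by omega]
      tauto
  rw [hsplice]

theorem G91_unique (hP : IsStratification P lam) (hwf : progWF P) {N : ℕ} (hN : ∀ a, lam a < N)
    {W W' : BView α} (hW : G91 (progTheory P) W) (hW' : G91 (progTheory P) W') : W = W' := by
  have hlevels : ∀ k, vrestrict W {a | lam a < k} = vrestrict W' {a | lam a < k} := by
    intro k
    induction k with
    | zero => simp [vrestrict_empty hW.1.1, vrestrict_empty hW'.1.1]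
    | succ k ih =>
      exact (vrestrict_subset_of_G91 hP hwf hW hW' ih).antisymm
        (vrestrict_subset_of_G91 hP hwf hW' hW ih.symm)
  simpa [show {a | lam a < N} = Set.univ from Set.eq_univ_of_forall hN] using hlevels N

end WorldViews

/-- for epistemically stratified programs FAEEL and G91 world views
coincide; in particular there is at most one world view in each semantics. -/
theorem stmt11 {α : Type} [Finite α] (P : EProgram α) (hwf : progWF P)
    (hstrat : stratified P) :
    (∀ W : BView α, FAEEL (progTheory P) W ↔ G91 (progTheory P) W) ∧
    (∀ W W' : BView α, FAEEL (progTheory P) W → FAEEL (progTheory P) W' → W = W') ∧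
    (∀ W W' : BView α, G91 (progTheory P) W → G91 (progTheory P) W' → W = W') := by
  obtain ⟨lam, hP⟩ := hstrat
  obtain ⟨N, hN⟩ : ∃ N, ∀ a, lam a < N := by
    obtain ⟨N, hN⟩ := (Set.finite_range lam).bddAbove
    exact ⟨N + 1, fun a => Nat.lt_succ_of_le (hN ⟨a, rfl⟩)⟩
  have hiff := FAEEL_iff_G91 hP hwf hN
  exact ⟨hiff, fun W W' h h' => G91_unique hP hwf hN ((hiff W).1 h) ((hiff W').1 h'),
    fun W W' => G91_unique hP hwf hN⟩

end Epist
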